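/- arXiv:2203.12051 — 2 statements merged into one kernel-verified Lean document; each statement's English description precedes it below -/
import Mathlib

section
/- Let p ∈ L^∞(ℝⁿ) with group of periods G = {e : p(·+e) = p a.e.}, and let H be a maximal linear subspace contained in G. If there exists a unit vector ξ ∈ H^⊥ and a sequence h_k ∈ G ∩ H^⊥ with h_k ≠ 0, h_k → 0, and h_k/|h_k| → ξ, then for every α ∈ ℝ one has p(x + αξ) = p(x) a.e., i.e., ℝξ ⊆ G, contradicting maximality of H. Consequently, L₀ = G ∩ H^⊥ is a discrete subgroup (a lattice) of H^⊥. -/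
/-
Write `G` for the group of a.e.-periods of `p`. It is closed: a period of `p` is a period of every
continuous mollification `p ⋆ φ_k`, the periods of a continuous function form a closed set, and a
common period of all `p ⋆ φ_k` is an a.e.-period of `p` because `p ⋆ φ_k → p` a.e.
If nonzero periods `h_k → 0` have directions `h_k / ‖h_k‖ → ξ`, then the periods
`round (α / ‖h_k‖) • h_k` converge to `α • ξ`, so the whole line `ℝ ξ` lies in the closed group `G`.
If `G ∩ Hᗮ` were not discrete, compactness of the unit sphere would produce such a `ξ` in `Hᗮ`,
and `H ⊔ ℝ ∙ ξ ⊆ G` would contradict the maximality of `H`.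
-/

open MeasureTheory Filter Topology
open scoped Convolution

noncomputable def aePeriods {G β : Type*} [MeasurableSpace G] [AddGroup G] [MeasurableAdd G]
    (μ : Measure G) [μ.IsAddRightInvariant] (f : G → β) : AddSubgroup G where
  carrier := {e | ∀ᵐ x ∂μ, f (x + e) = f x}
  zero_mem' := by simp
  add_mem' {e e'} he he' := by
    change ∀ᵐ x ∂μ, f (x + (e + e')) = f x
    filter_upwards [(measurePreserving_add_right μ e).quasiMeasurePreserving.ae he', he]
      with x h' h
    rw [← add_assoc, h', h]
  neg_mem' {e} he := by
    change ∀ᵐ x ∂μ, f (x + -e) = f x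
    filter_upwards [(measurePreserving_add_right μ (-e)).quasiMeasurePreserving.ae he] with x h
    rw [neg_add_cancel_right] at h
    exact h.symm

theorem convolution_add_of_mem_aePeriods {𝕜 G E E' F : Type*} [NontriviallyNormedField 𝕜]
    [NormedAddCommGroup E] [NormedAddCommGroup E'] [NormedAddCommGroup F] [NormedSpace 𝕜 E]
    [NormedSpace 𝕜 E'] [NormedSpace 𝕜 F] [NormedSpace ℝ F] [AddCommGroup G] [MeasurableSpace G]
    [MeasurableAdd G] [MeasurableNeg G] {μ : Measure G} [μ.IsAddLeftInvariant]
    [μ.IsNegInvariant] (φ : G → E) {g : G → E'}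
    (L : E →L[𝕜] E' →L[𝕜] F) {a : G} (ha : a ∈ aePeriods μ g) (x : G) :
    (φ ⋆[L, μ] g) (x + a) = (φ ⋆[L, μ] g) x := by
  simp only [convolution_def]
  refine integral_congr_ae ?_
  filter_upwards [(Measure.measurePreserving_sub_left μ x).quasiMeasurePreserving.ae ha] with t ht
  rw [add_sub_right_comm, ht]

theorem isClosed_setOf_forall_add_eq {X Y : Type*} [TopologicalSpace X] [Add X] [ContinuousAdd X]
    [TopologicalSpace Y] [T2Space Y] {g : X → Y} (hg : Continuous g) :
    IsClosed {a | ∀ x, g (x + a) = g x} := by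
  simp only [Set.ofPred_forall]
  exact isClosed_iInter fun x => isClosed_eq (hg.comp (continuous_const.add continuous_id))
    continuous_const

theorem ContDiffBump.exists_seq_tendsto_rOut_zero {E : Type*} [NormedAddCommGroup E]
    [NormedSpace ℝ E] :
    ∃ φ : ℕ → ContDiffBump (0 : E),
      Tendsto (fun k => (φ k).rOut) atTop (𝓝 0) ∧ ∀ k, (φ k).rOut ≤ 2 * (φ k).rIn := by
  refine ⟨fun k => ⟨1 / ((k : ℝ) + 1), 2 * (1 / ((k : ℝ) + 1)), by positivity, by
    linarith [show (0 : ℝ) < 1 / ((k : ℝ) + 1) by positivity]⟩, ?_, fun k => le_rfl⟩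
  simpa using tendsto_one_div_add_atTop_nhds_zero_nat.const_mul (2 : ℝ)

theorem isClosed_aePeriods {E F : Type*} [NormedAddCommGroup E] [NormedSpace ℝ E]
    [FiniteDimensional ℝ E] [MeasurableSpace E] [BorelSpace E] {μ : Measure E}
    [μ.IsAddHaarMeasure] [NormedAddCommGroup F] [NormedSpace ℝ F] [CompleteSpace F]
    {f : E → F} (hf : LocallyIntegrable f μ) : IsClosed (aePeriods μ f : Set E) := by
  obtain ⟨φ, hφ, hφK⟩ := ContDiffBump.exists_seq_tendsto_rOut_zero (E := E)
  set f_ : ℕ → E → F := fun k => (φ k).normed μ ⋆[ContinuousLinearMap.lsmul ℝ ℝ, μ] f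
  have hperiod : ∀ k, closure (aePeriods μ f : Set E) ⊆ {a | ∀ x, f_ k (x + a) = f_ k x} :=
    fun k => closure_minimal (fun a ha x => convolution_add_of_mem_aePeriods _ _ ha x)
      (isClosed_setOf_forall_add_eq ((φ k).hasCompactSupport_normed.continuous_convolution_left _
        (φ k).continuous_normed hf))
  have hlim := ContDiffBump.ae_convolution_tendsto_right_of_locallyIntegrable hφ
    (Eventually.of_forall hφK) hf
  refine closure_subset_iff_isClosed.mp fun e he => ?_
  filter_upwards [hlim, (measurePreserving_add_right μ e).quasiMeasurePreserving.ae hlim]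
    with x hx hxe
  exact tendsto_nhds_unique (hxe.congr fun k => hperiod k he x) hx

theorem abs_round_div_mul_sub_le (α : ℝ) {r : ℝ} (hr : r ≠ 0) :
    |round (α / r) * r - α| ≤ |r| / 2 := by
  calc |round (α / r) * r - α| = |α / r - round (α / r)| * |r| := by
        rw [← abs_mul, sub_mul, div_mul_cancel₀ α hr, abs_sub_comm]
    _ ≤ 1 / 2 * |r| := by gcongr; exact abs_sub_round _
    _ = |r| / 2 := by ring

theorem AddSubgroup.smul_mem_of_tendsto_normalize {E : Type*} [NormedAddCommGroup E]
    [NormedSpace ℝ E] {L : AddSubgroup E} (hL : IsClosed (L : Set E)) {ι : Type*} {l : Filter ι}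
    [l.NeBot] {h : ι → E} (hmem : ∀ k, h k ∈ L) (hne : ∀ k, h k ≠ 0) (h0 : Tendsto h l (𝓝 0))
    {ξ : E} (hξ : Tendsto (fun k => ‖h k‖⁻¹ • h k) l (𝓝 ξ)) (α : ℝ) : α • ξ ∈ L := by
  have hcoef : Tendsto (fun k => (round (α / ‖h k‖) : ℝ) * ‖h k‖) l (𝓝 α) := by
    rw [tendsto_iff_norm_sub_tendsto_zero]
    refine squeeze_zero (fun _ => norm_nonneg _) (fun k => ?_) (by simpa using h0.norm.div_const 2)
    simpa using abs_round_div_mul_sub_le α (norm_ne_zero_iff.mpr (hne k))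
  refine hL.mem_of_tendsto (hcoef.smul hξ) (Eventually.of_forall fun k => ?_)
  rw [SetLike.mem_coe, smul_smul, mul_assoc, mul_inv_cancel₀ (norm_ne_zero_iff.mpr (hne k)),
    mul_one, Int.cast_smul_eq_zsmul]
  exact zsmul_mem (hmem k) _

theorem exists_tendsto_normalize_of_forall_exists_norm_lt {E : Type*} [NormedAddCommGroup E]
    [NormedSpace ℝ E] [ProperSpace E] {T : Set E} (hT : ∀ δ > 0, ∃ e ∈ T, ‖e‖ < δ ∧ e ≠ 0) :
    ∃ ξ : E, ‖ξ‖ = 1 ∧ ∃ h : ℕ → E, (∀ k, h k ∈ T ∧ h k ≠ 0) ∧ Tendsto h atTop (𝓝 0) ∧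
      Tendsto (fun k => ‖h k‖⁻¹ • h k) atTop (𝓝 ξ) := by
  choose e heT hlt hne using fun k : ℕ => hT (1 / ((k : ℝ) + 1)) (by positivity)
  have he0 : Tendsto e atTop (𝓝 0) :=
    squeeze_zero_norm (fun k => (hlt k).le) tendsto_one_div_add_atTop_nhds_zero_nat
  obtain ⟨ξ, hξ, ψ, hψ, hlim⟩ := (isCompact_sphere (0 : E) 1).tendsto_subseq
    (x := fun k => ‖e k‖⁻¹ • e k) fun k => by simpa using norm_smul_inv_norm (𝕜 := ℝ) (hne k)
  exact ⟨ξ, by simpa using hξ, e ∘ ψ, fun k => ⟨heT _, hne _⟩, he0.comp hψ.tendsto_atTop, hlim⟩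

theorem Submodule.coe_sup_span_singleton_subset {R M : Type*} [Ring R] [AddCommGroup M]
    [Module R M] {H : Submodule R M} {L : AddSubgroup M} (hH : (H : Set M) ⊆ L) {ξ : M}
    (hξ : ∀ a : R, a • ξ ∈ L) : ((H ⊔ R ∙ ξ : Submodule R M) : Set M) ⊆ L := by
  intro x hx
  obtain ⟨y, hy, z, hz, rfl⟩ := Submodule.mem_sup.mp hx
  obtain ⟨a, rfl⟩ := Submodule.mem_span_singleton.mp hz
  exact add_mem (hH hy) (hξ a)

/-- If `H` is a maximal linear subspace contained in the group `G` of
a.e.-periods of `p ∈ L^∞(ℝⁿ)`, and a unit vector `ξ ∈ H^⊥` is a limit of normalized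
nonzero elements `h_k ∈ G ∩ H^⊥` with `h_k → 0`, then `ℝξ ⊆ G` (contradicting
maximality); consequently `L₀ = G ∩ H^⊥` is a discrete subgroup of `H^⊥`. -/
theorem periods_lattice_discrete
    (n : ℕ) (p : EuclideanSpace ℝ (Fin n) → ℝ) (hmeas : Measurable p)
    (C : ℝ) (hbd : ∀ x, |p x| ≤ C)
    (G : Set (EuclideanSpace ℝ (Fin n)))
    (hG : G = {e | ∀ᵐ x ∂volume, p (x + e) = p x})
    (H : Submodule ℝ (EuclideanSpace ℝ (Fin n)))
    (hHG : (H : Set (EuclideanSpace ℝ (Fin n))) ⊆ G)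
    (hmax : ∀ H' : Submodule ℝ (EuclideanSpace ℝ (Fin n)),
      (H' : Set (EuclideanSpace ℝ (Fin n))) ⊆ G → H ≤ H' → H' = H) :
    (∀ ξ : EuclideanSpace ℝ (Fin n), ξ ∈ Hᗮ → ‖ξ‖ = 1 →
      ∀ h : ℕ → EuclideanSpace ℝ (Fin n),
        (∀ k, h k ∈ G ∧ h k ∈ Hᗮ ∧ h k ≠ 0) →
        Tendsto h atTop (nhds 0) →
        Tendsto (fun k => ‖h k‖⁻¹ • h k) atTop (nhds ξ) →
        ∀ α : ℝ, (∀ᵐ x ∂volume, p (x + α • ξ) = p x) ∧ α • ξ ∈ G) ∧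
    (∃ δ : ℝ, 0 < δ ∧ ∀ e ∈ G, e ∈ Hᗮ → ‖e‖ < δ → e = 0) := by
  obtain rfl : G = aePeriods volume p := hG
  have hclosed : IsClosed (aePeriods volume p : Set (EuclideanSpace ℝ (Fin n))) :=
    isClosed_aePeriods ((memLp_top_of_bound hmeas.aestronglyMeasurable C
      (ae_of_all _ hbd)).locallyIntegrable le_top)
  refine ⟨fun ξ _ _ h hh h0 hdir α => ?_, ?_⟩
  · have hα := AddSubgroup.smul_mem_of_tendsto_normalize hclosed (fun k => (hh k).1)
      (fun k => (hh k).2.2) h0 hdir α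
    exact ⟨hα, hα⟩
  by_contra! hdisc
  obtain ⟨ξ, hξ1, h, hh, h0, hdir⟩ :=
    exists_tendsto_normalize_of_forall_exists_norm_lt (E := EuclideanSpace ℝ (Fin n))
      (T := (aePeriods volume p : Set _) ∩ Hᗮ) fun δ hδ => by
      obtain ⟨e, heG, heH, hlt, hne⟩ := hdisc δ hδ
      exact ⟨e, ⟨heG, heH⟩, hlt, hne⟩
  have hξH : ξ ∈ Hᗮ := H.isClosed_orthogonal.mem_of_tendsto hdir
    (Eventually.of_forall fun k => Hᗮ.smul_mem _ (hh k).1.2)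
  have hline := AddSubgroup.smul_mem_of_tendsto_normalize hclosed (fun k => (hh k).1.1)
    (fun k => (hh k).2) h0 hdir
  have hsup := hmax _ (Submodule.coe_sup_span_singleton_subset hHG hline) le_sup_left
  have hξ0 : ξ = 0 := Submodule.disjoint_def.mp H.orthogonal_disjoint ξ
    ((Submodule.span_singleton_le_iff_mem ξ H).mp (sup_eq_left.mp hsup)) hξH
  simp [hξ0] at hξ1
end

section
/- Let u₀(x) = m + v(pr(x)) + (δ/2) sin(2π ξ·x / r), where v : E → ℝ is continuous with group of periods exactly G₁ ⊆ E, E = {x : ξ·x = 0} is a hyperplane, pr is the projection onto E along a vector e₀ with ξ·e₀ = r, and v has zero mean over its periodicity cell. Then the group of periods of u₀ is exactly G = G₁ + ℤe₀: every period e of u₀ decomposes as e = e₁ + λe₀ with e₁ ∈ G₁ and λ ∈ ℤ. -/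
open Real

/-!
Write `λ = φ e / c` for the component of a period `e` along `e₀`. Testing the periodicity
identity on the line `ℝ e₀`, where the projection vanishes, leaves
`sin (2π (s + λ)) = sin (2π s) + const` for all `s`, which forces `λ ∈ ℤ`. The sine term is
then invariant under `e`, so the identity reduces to `v (y + pr e) = v y` on the hyperplane,
i.e. `pr e` is a period of `v`, and `e = pr e + λ e₀`.
-/

theorem Real.sin_two_pi_mul_add_int (y : ℝ) (k : ℤ) :
    sin (2 * π * (y + k)) = sin (2 * π * y) := by
  rw [mul_add, mul_comm (2 * π) (k : ℝ), sin_add_int_mul_two_pi]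

theorem Real.exists_int_eq_of_sin_shift_eq_add_const {l b : ℝ}
    (h : ∀ s, sin (2 * π * (s + l)) = sin (2 * π * s) + b) : ∃ k : ℤ, l = k := by
  -- `s = 0` and `s = 1/2` give `sin (2πl) = b = -sin (2πl)`; then `s = 1/4` gives `cos (2πl) = 1`.
  have h₀ := h 0
  have h₁ := h (1 / 2)
  have h₂ := h (1 / 4)
  rw [zero_add, mul_zero, sin_zero, zero_add] at h₀
  rw [show 2 * π * (1 / 2 + l) = 2 * π * l + π by ring, sin_add_pi,
    show 2 * π * (1 / 2 : ℝ) = π by ring, sin_pi, zero_add] at h₁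
  rw [show 2 * π * (1 / 4 + l) = 2 * π * l + π / 2 by ring, sin_add_pi_div_two,
    show 2 * π * (1 / 4 : ℝ) = π / 2 by ring, sin_pi_div_two] at h₂
  have hcos : cos (2 * π * l) = 1 := by linarith
  obtain ⟨k, hk⟩ := (cos_eq_one_iff _).mp hcos
  exact ⟨k, by nlinarith [pi_pos]⟩

noncomputable section ProjectionAlong

variable {V : Type*} [AddCommGroup V] [Module ℝ V] (φ : V →ₗ[ℝ] ℝ) (e₀ : V) (c : ℝ)

def projAlong (x : V) : V := x - (φ x / c) • e₀

theorem projAlong_add (x y : V) :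
    projAlong φ e₀ c (x + y) = projAlong φ e₀ c x + projAlong φ e₀ c y := by
  simp only [projAlong, map_add, add_div, add_smul]
  abel

theorem projAlong_of_apply_eq_zero {x : V} (hx : φ x = 0) : projAlong φ e₀ c x = x := by
  simp [projAlong, hx]

variable {φ e₀ c}

theorem apply_projAlong (hc : c ≠ 0) (he₀ : φ e₀ = c) (x : V) :
    φ (projAlong φ e₀ c x) = 0 := by
  simp [projAlong, he₀, div_mul_cancel₀ _ hc]

theorem projAlong_smul_self (hc : c ≠ 0) (he₀ : φ e₀ = c) (t : ℝ) :
    projAlong φ e₀ c (t • e₀) = 0 := by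
  simp [projAlong, he₀, mul_div_cancel_right₀ _ hc]

variable (φ e₀ c)

def perturbedProfile (m a : ℝ) (v : V → ℝ) (x : V) : ℝ :=
  m + v (projAlong φ e₀ c x) + a * sin (2 * π * φ x / c)

theorem perturbedProfile_add (m a : ℝ) (v : V → ℝ) (x e : V) :
    perturbedProfile φ e₀ c m a v (x + e) =
      m + v (projAlong φ e₀ c x + projAlong φ e₀ c e) + a * sin (2 * π * (φ x / c + φ e / c)) := by
  rw [perturbedProfile, projAlong_add, map_add, ← add_div, mul_div_assoc]

variable {φ e₀ c}

theorem exists_int_eq_of_perturbedProfile_periodic (hc : c ≠ 0) (he₀ : φ e₀ = c) {m a : ℝ}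
    (ha : a ≠ 0) {v : V → ℝ} {e : V}
    (hper : ∀ x, perturbedProfile φ e₀ c m a v (x + e) = perturbedProfile φ e₀ c m a v x) :
    ∃ k : ℤ, φ e / c = k := by
  refine exists_int_eq_of_sin_shift_eq_add_const (b := (v 0 - v (projAlong φ e₀ c e)) / a)
    fun s => ?_
  have h := hper (s • e₀)
  rw [perturbedProfile_add, perturbedProfile, projAlong_smul_self hc he₀, zero_add,
    map_smul, he₀, smul_eq_mul, mul_div_cancel_right₀ _ hc, mul_div_assoc,
    mul_div_cancel_right₀ _ hc] at h
  rw [← sub_eq_iff_eq_add', eq_div_iff ha]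
  linarith

theorem perturbedProfile_periodic_iff (hc : c ≠ 0) (he₀ : φ e₀ = c) (m : ℝ) {a : ℝ}
    (ha : a ≠ 0) (v : V → ℝ) (e : V) :
    (∀ x, perturbedProfile φ e₀ c m a v (x + e) = perturbedProfile φ e₀ c m a v x) ↔
      ∃ e₁, (φ e₁ = 0 ∧ ∀ x, φ x = 0 → v (x + e₁) = v x) ∧ ∃ l : ℤ, e = e₁ + (l : ℝ) • e₀ := by
  constructor
  · intro hper
    obtain ⟨k, hk⟩ := exists_int_eq_of_perturbedProfile_periodic hc he₀ ha hper
    refine ⟨projAlong φ e₀ c e, ⟨apply_projAlong hc he₀ e, fun x hx => ?_⟩, k, ?_⟩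
    · have h := hper x
      rwa [perturbedProfile_add, perturbedProfile, hk, sin_two_pi_mul_add_int, ← mul_div_assoc,
        projAlong_of_apply_eq_zero φ e₀ c hx, add_left_inj, add_right_inj] at h
    · rw [projAlong, ← hk, sub_add_cancel]
  · rintro ⟨e₁, ⟨he₁, hv⟩, l, rfl⟩ x
    have hproj : projAlong φ e₀ c (e₁ + (l : ℝ) • e₀) = e₁ := by
      rw [projAlong_add, projAlong_smul_self hc he₀, projAlong_of_apply_eq_zero φ e₀ c he₁,
        add_zero]
    have hshift : φ (e₁ + (l : ℝ) • e₀) / c = l := by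
      rw [map_add, map_smul, he₁, he₀, zero_add, smul_eq_mul, mul_div_cancel_right₀ _ hc]
    rw [perturbedProfile_add, hproj, hshift, sin_two_pi_mul_add_int, hv _ (apply_projAlong hc he₀ x),
      perturbedProfile, mul_div_assoc]

end ProjectionAlong

theorem periods_of_perturbed_initial_data_general
    (n : ℕ) (ξ e₀ : Fin n → ℝ)
    (r : ℕ) (hr : 0 < r) (hξe₀ : ξ ⬝ᵥ e₀ = (r : ℝ))
    (m δ : ℝ) (hδ : 0 < δ)
    (v : (Fin n → ℝ) → ℝ)
    (G₁ : Set (Fin n → ℝ))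
    (hG₁ : ∀ e, e ∈ G₁ ↔ (ξ ⬝ᵥ e = 0 ∧ ∀ x, ξ ⬝ᵥ x = 0 → v (x + e) = v x)) :
    let u₀ : (Fin n → ℝ) → ℝ := fun x =>
      m + v (x - ((ξ ⬝ᵥ x) / r) • e₀) + δ / 2 * Real.sin (2 * Real.pi * (ξ ⬝ᵥ x) / r)
    ∀ e : Fin n → ℝ,
      (∀ x, u₀ (x + e) = u₀ x) ↔ ∃ e₁ ∈ G₁, ∃ l : ℤ, e = e₁ + (l : ℝ) • e₀ := by
  intro u₀ e
  simp only [hG₁]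
  exact perturbedProfile_periodic_iff (φ := dotProductBilin ℝ ℝ ξ) (by positivity) hξe₀ m
    (by positivity) v e

/-- The function
`u₀(x) = m + v(pr x) + (δ/2) sin(2π ξ·x / r)`, where `v` is continuous on the hyperplane
`E = {ξ·x = 0}` with group of periods (within `E`) exactly `G₁`, and
`pr x = x − ((ξ·x)/r) e₀` is the projection onto `E` along `e₀` (`ξ·e₀ = r`), has group
of periods exactly `G = G₁ + ℤe₀`: a vector `e` is a period of `u₀` iff `e = e₁ + λe₀`
with `e₁ ∈ G₁`, `λ ∈ ℤ`. -/
theorem periods_of_perturbed_initial_data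
    (n : ℕ) (ξ e₀ : Fin n → ℝ) (hξ : ξ ≠ 0)
    (r : ℕ) (hr : 0 < r) (hξe₀ : ξ ⬝ᵥ e₀ = (r : ℝ))
    (m δ : ℝ) (hδ : 0 < δ)
    (v : (Fin n → ℝ) → ℝ) (hv : Continuous v)
    (C : ℝ) (hbd : ∀ x, |v x| ≤ C)
    (G₁ : Set (Fin n → ℝ))
    (hG₁ : ∀ e, e ∈ G₁ ↔ (ξ ⬝ᵥ e = 0 ∧ ∀ x, ξ ⬝ᵥ x = 0 → v (x + e) = v x)) :
    let u₀ : (Fin n → ℝ) → ℝ := fun x =>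
      m + v (x - ((ξ ⬝ᵥ x) / r) • e₀) + δ / 2 * Real.sin (2 * Real.pi * (ξ ⬝ᵥ x) / r)
    ∀ e : Fin n → ℝ,
      (∀ x, u₀ (x + e) = u₀ x) ↔ ∃ e₁ ∈ G₁, ∃ l : ℤ, e = e₁ + (l : ℝ) • e₀ :=
  periods_of_perturbed_initial_data_general n ξ e₀ r hr hξe₀ m δ hδ v G₁ hG₁
end
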